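/- Let q₁(t) = f₁ + 2g₁t + h₁t² and q₂(t) = f₂ + 2g₂t + h₂t² be real quadratics positive on the open interval (y, x) with x > y, whose product has at most simple zeros on [y,x], and such that g₁² − f₁h₁ ≥ 0 and g₂² − f₂h₂ ≥ 0. Set (x−y)U = √(q₁(x)q₂(y)) + √(q₁(y)q₂(x)), T = 2g₁g₂ − f₁h₂ − f₂h₁, and V = 2√((g₁²−f₁h₁)(g₂²−f₂h₂)). Then ∫_y^x [q₁(t)q₂(t)]^{-1/2} dt = 2 R_F(U² + T + V, U² + T − V, U²). -/

import Mathlib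

open MeasureTheory Real

noncomputable def RC (x y : ℝ) : ℝ :=
  (1/2) * ∫ t in Set.Ioi (0:ℝ), (Real.sqrt (t + x))⁻¹ * (t + y)⁻¹

noncomputable def RF (x y z : ℝ) : ℝ :=
  (1/2) * ∫ t in Set.Ioi (0:ℝ), (Real.sqrt ((t + x) * (t + y) * (t + z)))⁻¹

noncomputable def RD (x y z : ℝ) : ℝ :=
  (3/2) * ∫ t in Set.Ioi (0:ℝ),
    (Real.sqrt ((t + x) * (t + y)))⁻¹ * ((t + z) * Real.sqrt (t + z))⁻¹

noncomputable def RJ (x y z p : ℝ) : ℝ :=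
  (3/2) * ∫ t in Set.Ioi (0:ℝ),
    (Real.sqrt ((t + x) * (t + y) * (t + z)))⁻¹ * (t + p)⁻¹

noncomputable def RG (x y z : ℝ) : ℝ :=
  (1/4) * ∫ t in Set.Ioi (0:ℝ),
    (Real.sqrt ((t + x) * (t + y) * (t + z)))⁻¹ *
      (x / (t + x) + y / (t + y) + z / (t + z)) * t

/-!
Substitute `s = u(t)² - U²` with `u(t) = (√(q₁(t) q₂(y)) + √(q₁(y) q₂(t))) / (t - y)`. Then
`u(x) = U`, and `u` blows up at `y` because `q₁ q₂` has at most a simple zero there, so `s` maps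
`(y, x)` decreasingly onto `(0, ∞)`. With the polar forms `Pᵢ(t) = fᵢ + gᵢ (t + y) + hᵢ t y`, which
satisfy `Pᵢ² = qᵢ(t) qᵢ(y) + (gᵢ² - fᵢ hᵢ)(t - y)²` and are positive on `(y, x)`, one finds
`u² + T = 2 (P₁ P₂ + √(q₁(t) q₁(y) q₂(t) q₂(y))) / (t - y)²` and hence
`(u² + T)² - V² = W² / (t - y)⁴`, `W = 2 (√(q₂(t) q₂(y)) P₁ + √(q₁(t) q₁(y)) P₂)`, while
`u' = -W / (2 √(q₁(t) q₂(t)) (t - y)²)`. So `ds / √((s + U² + T + V)(s + U² + T - V)(s + U²))`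
is `-dt / √(q₁(t) q₂(t))`.
-/

open Set Filter Topology

lemma HasDerivAt.nonneg_of_eq_zero_of_pos_right {f : ℝ → ℝ} {f' y : ℝ} (hf : HasDerivAt f f' y)
    (hy : f y = 0) (hpos : ∀ᶠ t in 𝓝[>] y, 0 < f t) : 0 ≤ f' := by
  refine ge_of_tendsto (hf.tendsto_slope.mono_left (nhdsGT_le_nhdsNE y)) ?_
  filter_upwards [hpos, self_mem_nhdsWithin] with t ht hyt
  rw [slope_def_field, hy, sub_zero]
  exact (div_pos ht (sub_pos.mpr hyt)).le

lemma HasDerivAt.pos_or_eq_zero_and_pos {f : ℝ → ℝ} {f' y : ℝ} (hf : HasDerivAt f f' y)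
    (hpos : ∀ᶠ t in 𝓝[>] y, 0 < f t) (hsimple : ¬(f y = 0 ∧ f' = 0)) :
    0 < f y ∨ f y = 0 ∧ 0 < f' := by
  have hnonneg : 0 ≤ f y :=
    ge_of_tendsto (hf.continuousAt.tendsto.mono_left nhdsWithin_le_nhds)
      (hpos.mono fun _ => le_of_lt)
  rcases hnonneg.lt_or_eq with hy | hy
  · exact .inl hy
  · exact .inr ⟨hy.symm, (hf.nonneg_of_eq_zero_of_pos_right hy.symm hpos).lt_of_ne
      fun h => hsimple ⟨hy.symm, h.symm⟩⟩

lemma HasDerivAt.pos_or_eq_zero_and_pos_of_mul {f g : ℝ → ℝ} {f' g' y : ℝ}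
    (hf : HasDerivAt f f' y) (hg : HasDerivAt g g' y)
    (hfpos : ∀ᶠ t in 𝓝[>] y, 0 < f t) (hgpos : ∀ᶠ t in 𝓝[>] y, 0 < g t)
    (hsimple : ¬(f y * g y = 0 ∧ f' * g y + f y * g' = 0)) :
    (0 < f y ∨ f y = 0 ∧ 0 < f') ∧ (0 < g y ∨ g y = 0 ∧ 0 < g') ∧ (0 < f y ∨ 0 < g y) := by
  have hf' := hf.pos_or_eq_zero_and_pos hfpos fun h => hsimple ⟨by simp [h.1], by simp [h.1, h.2]⟩
  have hg' := hg.pos_or_eq_zero_and_pos hgpos fun h => hsimple ⟨by simp [h.1], by simp [h.1, h.2]⟩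
  refine ⟨hf', hg', ?_⟩
  rcases hf' with h1 | ⟨h1, -⟩
  · exact .inl h1
  rcases hg' with h2 | ⟨h2, -⟩
  · exact .inr h2
  exact absurd ⟨by simp [h1], by simp [h1, h2]⟩ hsimple

lemma tendsto_sub_inv_nhdsGT (y : ℝ) : Tendsto (fun t => (t - y)⁻¹) (𝓝[>] y) atTop := by
  refine tendsto_inv_nhdsGT_zero.comp ?_
  have : Tendsto (fun t => t - y) (𝓝 y) (𝓝 0) := by
    simpa using (continuous_sub_right y).tendsto y
  exact tendsto_nhdsWithin_of_tendsto_nhds_of_eventually_within _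
    (this.mono_left nhdsWithin_le_nhds)
    (eventually_nhdsWithin_of_forall fun t (ht : y < t) => sub_pos.mpr ht)

lemma HasDerivAt.tendsto_div_sq_atTop {f : ℝ → ℝ} {f' y : ℝ} (hf : HasDerivAt f f' y)
    (h : 0 < f y ∨ f y = 0 ∧ 0 < f') : Tendsto (fun t => f t / (t - y) ^ 2) (𝓝[>] y) atTop := by
  have hinv := tendsto_sub_inv_nhdsGT y
  rcases h with hy | ⟨hy, hf'⟩
  · refine ((hf.continuousAt.tendsto.mono_left nhdsWithin_le_nhds).pos_mul_atTop hy
      (hinv.atTop_mul_atTop₀ hinv)).congr fun t => by rw [div_eq_mul_inv, ← inv_pow, sq]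
  · refine ((hf.tendsto_slope.mono_left (nhdsGT_le_nhdsNE y)).pos_mul_atTop hf' hinv).congr
      fun t => ?_
    rw [slope_def_field, hy, sub_zero, div_mul_eq_mul_div, ← div_eq_mul_inv, div_div, ← sq]

lemma image_Ioo_eq_Ioi_of_strictAntiOn {φ : ℝ → ℝ} {x y : ℝ} (hxy : y < x)
    (hcont : ContinuousOn φ (Ioc y x)) (hanti : StrictAntiOn φ (Ioc y x))
    (htop : Tendsto φ (𝓝[>] y) atTop) : φ '' Ioo y x = Ioi (φ x) := by
  refine (image_subset_iff.mpr fun t ht => hanti ⟨ht.1, ht.2.le⟩ ⟨hxy, le_rfl⟩ ht.2).antisymm ?_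
  have hleft : Tendsto φ (𝓝[<] x) (𝓝 (φ x)) :=
    ((hcont x ⟨hxy, le_rfl⟩).tendsto).mono_left (nhdsWithin_le_of_mem (Ioc_mem_nhdsLT hxy))
  exact isPreconnected_Ioo.intermediate_value_Ioi
    (le_principal_iff.mpr (Ioo_mem_nhdsLT hxy)) (le_principal_iff.mpr (Ioo_mem_nhdsGT hxy))
    (hcont.mono Ioo_subset_Ioc_self) hleft htop

lemma integral_abs_deriv_mul_comp_eq_integral_Ioi {φ φ' : ℝ → ℝ} {x y : ℝ} (g : ℝ → ℝ)
    (hxy : y < x) (hcont : ContinuousOn φ (Ioc y x))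
    (hderiv : ∀ t ∈ Ioo y x, HasDerivAt φ (φ' t) t) (hneg : ∀ t ∈ Ioo y x, φ' t < 0)
    (htop : Tendsto φ (𝓝[>] y) atTop) :
    ∫ t in Ioo y x, |φ' t| * g (φ t) = ∫ s in Ioi (φ x), g s := by
  have hanti : StrictAntiOn φ (Ioc y x) :=
    strictAntiOn_of_deriv_neg (convex_Ioc y x) hcont fun t ht => by
      rw [interior_Ioc] at ht
      exact (hderiv t ht).deriv ▸ hneg t ht
  rw [← image_Ioo_eq_Ioi_of_strictAntiOn hxy hcont hanti htop,
    integral_image_eq_integral_abs_deriv_smul measurableSet_Ioo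
      (fun t ht => (hderiv t ht).hasDerivWithinAt) (hanti.injOn.mono Ioo_subset_Ioc_self)]
  simp only [smul_eq_mul]

lemma mul_add_mul_pos_of_pos_or_pos {a b c d : ℝ} (ha : 0 < a) (hb : 0 < b) (hc : 0 ≤ c)
    (hd : 0 ≤ d) (h : 0 < c ∨ 0 < d) : 0 < a * d + c * b := by
  rcases h with h | h <;> positivity

lemma abs_mul_inv_sqrt_eq_inv_mul {u w p a b T V U : ℝ} (hu : 0 < u) (hw : 0 < w) (hp : p ≠ 0)
    (ha : 0 < a) (hb : 0 < b) (h : (u ^ 2 + T) ^ 2 - V ^ 2 = (2 * a * b * w / p ^ 2) ^ 2) :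
    |2 * u * (-w / p ^ 2)| * (√((u ^ 2 - U ^ 2 + (U ^ 2 + T + V))
      * (u ^ 2 - U ^ 2 + (U ^ 2 + T - V)) * (u ^ 2 - U ^ 2 + U ^ 2)))⁻¹ = (a * b)⁻¹ := by
  have hprod : (u ^ 2 - U ^ 2 + (U ^ 2 + T + V)) * (u ^ 2 - U ^ 2 + (U ^ 2 + T - V))
      * (u ^ 2 - U ^ 2 + U ^ 2) = (2 * a * b * w / p ^ 2 * u) ^ 2 := by
    linear_combination u ^ 2 * h
  rw [hprod, sqrt_sq (by positivity), neg_div, mul_neg, abs_neg, abs_of_pos (by positivity)]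
  field_simp

def quadratic (f g h t : ℝ) : ℝ := f + 2 * g * t + h * t ^ 2

def quadraticPolar (f g h t y : ℝ) : ℝ := f + g * (t + y) + h * (t * y)

section Quadratic

variable (f g h : ℝ)

lemma hasDerivAt_quadratic (t : ℝ) : HasDerivAt (quadratic f g h) (2 * (g + h * t)) t := by
  have := (((hasDerivAt_id t).const_mul (2 * g)).const_add f).add ((hasDerivAt_pow 2 t).const_mul h)
  exact this.congr_deriv (by simp only [mul_one, Nat.add_one_sub_one, pow_one]; ring)

lemma continuous_quadratic : Continuous (quadratic f g h) := by
  unfold quadratic; fun_prop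

lemma quadraticPolar_sq (t y : ℝ) :
    quadraticPolar f g h t y ^ 2 =
      quadratic f g h t * quadratic f g h y + (g ^ 2 - f * h) * (t - y) ^ 2 := by
  unfold quadraticPolar quadratic; ring

lemma quadraticPolar_eq_quadratic_left (t y : ℝ) :
    quadraticPolar f g h t y = quadratic f g h y + (g + h * y) * (t - y) := by
  unfold quadraticPolar quadratic; ring

lemma quadraticPolar_eq_quadratic_right (t y : ℝ) :
    quadraticPolar f g h t y = quadratic f g h t - (g + h * t) * (t - y) := by
  unfold quadraticPolar quadratic; ring

end Quadratic

lemma quadratic_mul_add_quadratic_mul (f1 g1 h1 f2 g2 h2 t y : ℝ) :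
    quadratic f1 g1 h1 t * quadratic f2 g2 h2 y + quadratic f1 g1 h1 y * quadratic f2 g2 h2 t =
      2 * quadraticPolar f1 g1 h1 t y * quadraticPolar f2 g2 h2 t y
        - (2 * g1 * g2 - f1 * h2 - f2 * h1) * (t - y) ^ 2 := by
  unfold quadraticPolar quadratic; ring

lemma quadraticPolar_pos {f g h x y : ℝ} (hd : 0 ≤ g ^ 2 - f * h)
    (hq : ∀ t ∈ Ioo y x, 0 < quadratic f g h t)
    (hy : 0 < quadratic f g h y ∨ quadratic f g h y = 0 ∧ 0 < 2 * (g + h * y)) :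
    ∀ t ∈ Ioo y x, 0 < quadraticPolar f g h t y := by
  intro t ht
  rcases hy with hy | ⟨hy, hm⟩
  · by_contra! hle
    have hcont : Continuous fun s => quadraticPolar f g h s y := by
      unfold quadraticPolar; fun_prop
    have hPy : quadraticPolar f g h y y = quadratic f g h y := by
      simp [quadraticPolar_eq_quadratic_left]
    obtain ⟨s, hs, hs0⟩ := intermediate_value_Icc' ht.1.le hcont.continuousOn
      ⟨hle, hPy ▸ hy.le⟩
    have hys : y < s := hs.1.lt_of_ne (by rintro rfl; linarith)
    have hsq := quadraticPolar_sq f g h s y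
    rw [show quadraticPolar f g h s y = 0 from hs0] at hsq
    nlinarith [mul_pos (hq s ⟨hys, hs.2.trans_lt ht.2⟩) hy, mul_nonneg hd (sq_nonneg (s - y))]
  · rw [quadraticPolar_eq_quadratic_left, hy, zero_add]
    exact mul_pos (by linarith) (sub_pos.mpr ht.1)

lemma hasDerivAt_sqrt_quadratic_div {f g h t y : ℝ} (ht : 0 < quadratic f g h t) (hty : t ≠ y) :
    HasDerivAt (fun s => √(quadratic f g h s) / (s - y))
      (-(quadraticPolar f g h t y / √(quadratic f g h t)) / (t - y) ^ 2) t := by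
  have hsq : √(quadratic f g h t) ^ 2 = quadratic f g h t := sq_sqrt ht.le
  have hpos : 0 < √(quadratic f g h t) := sqrt_pos.mpr ht
  refine (((hasDerivAt_quadratic f g h t).sqrt ht.ne').div ((hasDerivAt_id t).sub_const y)
    (sub_ne_zero.mpr hty)).congr_deriv ?_
  rw [id, quadraticPolar_eq_quadratic_right]
  field_simp
  linear_combination -hsq

lemma sq_add_sub_eq_sq_of_sq_eq_quadratic {f1 g1 h1 f2 g2 h2 t y A B C D : ℝ}
    (hA : A ^ 2 = quadratic f1 g1 h1 t) (hB : B ^ 2 = quadratic f2 g2 h2 t)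
    (hC : C ^ 2 = quadratic f1 g1 h1 y) (hD : D ^ 2 = quadratic f2 g2 h2 y) :
    ((A * D + C * B) ^ 2 + (2 * g1 * g2 - f1 * h2 - f2 * h1) * (t - y) ^ 2) ^ 2
        - 4 * ((g1 ^ 2 - f1 * h1) * (g2 ^ 2 - f2 * h2)) * (t - y) ^ 4 =
      (2 * (B * D * quadraticPolar f1 g1 h1 t y + A * C * quadraticPolar f2 g2 h2 t y)) ^ 2 := by
  set P1 := quadraticPolar f1 g1 h1 t y
  set P2 := quadraticPolar f2 g2 h2 t y
  have hsum : (A * D + C * B) ^ 2 + (2 * g1 * g2 - f1 * h2 - f2 * h1) * (t - y) ^ 2 =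
      2 * (P1 * P2 + A * B * C * D) := by
    linear_combination D ^ 2 * hA + (quadratic f1 g1 h1 t) * hD + B ^ 2 * hC
      + (quadratic f1 g1 h1 y) * hB + quadratic_mul_add_quadratic_mul f1 g1 h1 f2 g2 h2 t y
  have hP1 : P1 ^ 2 - (A * C) ^ 2 = (g1 ^ 2 - f1 * h1) * (t - y) ^ 2 := by
    linear_combination quadraticPolar_sq f1 g1 h1 t y - C ^ 2 * hA - (quadratic f1 g1 h1 t) * hC
  have hP2 : P2 ^ 2 - (B * D) ^ 2 = (g2 ^ 2 - f2 * h2) * (t - y) ^ 2 := by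
    linear_combination quadraticPolar_sq f2 g2 h2 t y - D ^ 2 * hB - (quadratic f2 g2 h2 t) * hD
  rw [hsum]
  -- `(P₁ P₂ + a b)² - (b P₁ + a P₂)² = (P₁² - a²)(P₂² - b²)` with `a = A C`, `b = B D`
  linear_combination 4 * ((P2 ^ 2 - (B * D) ^ 2) * hP1 + (g1 ^ 2 - f1 * h1) * (t - y) ^ 2 * hP2)

noncomputable def crossSlope (q1 q2 : ℝ → ℝ) (y t : ℝ) : ℝ :=
  (√(q1 t) * √(q2 y) + √(q1 y) * √(q2 t)) / (t - y)

lemma continuousOn_crossSlope {q1 q2 : ℝ → ℝ} (hq1 : Continuous q1) (hq2 : Continuous q2)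
    (y : ℝ) : ContinuousOn (crossSlope q1 q2 y) {y}ᶜ :=
  ContinuousOn.div (by fun_prop) (by fun_prop) fun _ ht => sub_ne_zero.mpr ht

noncomputable def crossPolar (f1 g1 h1 f2 g2 h2 y t : ℝ) : ℝ :=
  quadraticPolar f1 g1 h1 t y / √(quadratic f1 g1 h1 t) * √(quadratic f2 g2 h2 y)
    + √(quadratic f1 g1 h1 y) * (quadraticPolar f2 g2 h2 t y / √(quadratic f2 g2 h2 t))

section CrossSlope

variable {f1 g1 h1 f2 g2 h2 y t : ℝ}

lemma hasDerivAt_crossSlope (ht1 : 0 < quadratic f1 g1 h1 t) (ht2 : 0 < quadratic f2 g2 h2 t)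
    (hty : t ≠ y) :
    HasDerivAt (crossSlope (quadratic f1 g1 h1) (quadratic f2 g2 h2) y)
      (-crossPolar f1 g1 h1 f2 g2 h2 y t / (t - y) ^ 2) t := by
  have hsplit : crossSlope (quadratic f1 g1 h1) (quadratic f2 g2 h2) y = fun s =>
      √(quadratic f2 g2 h2 y) * (√(quadratic f1 g1 h1 s) / (s - y))
        + √(quadratic f1 g1 h1 y) * (√(quadratic f2 g2 h2 s) / (s - y)) := by
    ext s; simp only [crossSlope]; ring
  rw [hsplit]
  exact (((hasDerivAt_sqrt_quadratic_div ht1 hty).const_mul _).add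
    ((hasDerivAt_sqrt_quadratic_div ht2 hty).const_mul _)).congr_deriv (by rw [crossPolar]; ring)

lemma crossSlope_pos (ht1 : 0 < quadratic f1 g1 h1 t) (ht2 : 0 < quadratic f2 g2 h2 t)
    (hyt : y < t) (hy : 0 < quadratic f1 g1 h1 y ∨ 0 < quadratic f2 g2 h2 y) :
    0 < crossSlope (quadratic f1 g1 h1) (quadratic f2 g2 h2) y t :=
  div_pos (mul_add_mul_pos_of_pos_or_pos (sqrt_pos.mpr ht1) (sqrt_pos.mpr ht2) (sqrt_nonneg _)
    (sqrt_nonneg _) (hy.imp sqrt_pos.mpr sqrt_pos.mpr)) (sub_pos.mpr hyt)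

lemma crossPolar_pos {x : ℝ} (hd1 : 0 ≤ g1 ^ 2 - f1 * h1) (hd2 : 0 ≤ g2 ^ 2 - f2 * h2)
    (hpos1 : ∀ t ∈ Ioo y x, 0 < quadratic f1 g1 h1 t)
    (hpos2 : ∀ t ∈ Ioo y x, 0 < quadratic f2 g2 h2 t)
    (hy1 : 0 < quadratic f1 g1 h1 y ∨ quadratic f1 g1 h1 y = 0 ∧ 0 < 2 * (g1 + h1 * y))
    (hy2 : 0 < quadratic f2 g2 h2 y ∨ quadratic f2 g2 h2 y = 0 ∧ 0 < 2 * (g2 + h2 * y))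
    (hy : 0 < quadratic f1 g1 h1 y ∨ 0 < quadratic f2 g2 h2 y) (ht : t ∈ Ioo y x) :
    0 < crossPolar f1 g1 h1 f2 g2 h2 y t :=
  mul_add_mul_pos_of_pos_or_pos
    (div_pos (quadraticPolar_pos hd1 hpos1 hy1 t ht) (sqrt_pos.mpr (hpos1 t ht)))
    (div_pos (quadraticPolar_pos hd2 hpos2 hy2 t ht) (sqrt_pos.mpr (hpos2 t ht)))
    (sqrt_nonneg _) (sqrt_nonneg _) (hy.imp sqrt_pos.mpr sqrt_pos.mpr)

lemma crossSlope_sq_add_sq_sub_eq_sq (ht1 : 0 < quadratic f1 g1 h1 t)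
    (ht2 : 0 < quadratic f2 g2 h2 t) (hy1 : 0 ≤ quadratic f1 g1 h1 y)
    (hy2 : 0 ≤ quadratic f2 g2 h2 y) (hty : t ≠ y) :
    (crossSlope (quadratic f1 g1 h1) (quadratic f2 g2 h2) y t ^ 2
        + (2 * g1 * g2 - f1 * h2 - f2 * h1)) ^ 2
        - 4 * ((g1 ^ 2 - f1 * h1) * (g2 ^ 2 - f2 * h2)) =
      (2 * √(quadratic f1 g1 h1 t) * √(quadratic f2 g2 h2 t)
        * crossPolar f1 g1 h1 f2 g2 h2 y t / (t - y) ^ 2) ^ 2 := by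
  have hA := sqrt_pos.mpr ht1
  have hB := sqrt_pos.mpr ht2
  have hp : t - y ≠ 0 := sub_ne_zero.mpr hty
  have key := sq_add_sub_eq_sq_of_sq_eq_quadratic (sq_sqrt ht1.le) (sq_sqrt ht2.le)
    (sq_sqrt hy1) (sq_sqrt hy2)
  rw [crossSlope, crossPolar]
  field_simp
  linear_combination key

lemma tendsto_crossSlope_sq_atTop
    (hy1 : 0 < quadratic f1 g1 h1 y ∨ quadratic f1 g1 h1 y = 0 ∧ 0 < 2 * (g1 + h1 * y))
    (hy2 : 0 < quadratic f2 g2 h2 y ∨ quadratic f2 g2 h2 y = 0 ∧ 0 < 2 * (g2 + h2 * y))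
    (hy : 0 < quadratic f1 g1 h1 y ∨ 0 < quadratic f2 g2 h2 y) :
    Tendsto (fun t => crossSlope (quadratic f1 g1 h1) (quadratic f2 g2 h2) y t ^ 2)
      (𝓝[>] y) atTop := by
  set q1 := quadratic f1 g1 h1
  set q2 := quadratic f2 g2 h2
  have hN : HasDerivAt (fun s => q1 s * q2 y + q1 y * q2 s)
      (2 * (g1 + h1 * y) * q2 y + q1 y * (2 * (g2 + h2 * y))) y :=
    ((hasDerivAt_quadratic f1 g1 h1 y).mul_const _).add
      ((hasDerivAt_quadratic f2 g2 h2 y).const_mul _)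
  have hNy : 0 < q1 y * q2 y + q1 y * q2 y ∨ q1 y * q2 y + q1 y * q2 y = 0 ∧
      0 < 2 * (g1 + h1 * y) * q2 y + q1 y * (2 * (g2 + h2 * y)) := by
    rcases hy1 with h1 | ⟨h1, m1⟩ <;> rcases hy2 with h2 | ⟨h2, m2⟩
    · exact .inl (by positivity)
    · exact .inr ⟨by simp [h2], by simp [h2]; positivity⟩
    · exact .inr ⟨by simp [h1], by simp [h1]; positivity⟩
    · rw [h1, h2] at hy; exact absurd hy (by simp)
  have hq1y : 0 ≤ q1 y := hy1.elim le_of_lt fun h => h.1.ge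
  have hq2y : 0 ≤ q2 y := hy2.elim le_of_lt fun h => h.1.ge
  refine tendsto_atTop_mono' _ ?_ (hN.tendsto_div_sq_atTop hNy)
  filter_upwards with s
  rw [crossSlope, div_pow]
  gcongr
  have hA : q1 s ≤ √(q1 s) ^ 2 := sq_sqrt' (x := q1 s) ▸ le_max_left _ _
  have hB : q2 s ≤ √(q2 s) ^ 2 := sq_sqrt' (x := q2 s) ▸ le_max_left _ _
  calc q1 s * q2 y + q1 y * q2 s ≤ √(q1 s) ^ 2 * q2 y + q1 y * √(q2 s) ^ 2 :=
        add_le_add (mul_le_mul_of_nonneg_right hA hq2y) (mul_le_mul_of_nonneg_left hB hq1y)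
    _ = (√(q1 s) * √(q2 y)) ^ 2 + (√(q1 y) * √(q2 s)) ^ 2 := by
        rw [mul_pow, mul_pow, sq_sqrt hq1y, sq_sqrt hq2y]
    _ ≤ (√(q1 s) * √(q2 y) + √(q1 y) * √(q2 s)) ^ 2 := by
        nlinarith [mul_nonneg (mul_nonneg (sqrt_nonneg (q1 s)) (sqrt_nonneg (q2 y)))
          (mul_nonneg (sqrt_nonneg (q1 y)) (sqrt_nonneg (q2 s)))]

end CrossSlope

theorem integral_inv_sqrt_quadratic_mul_quadratic {f1 g1 h1 f2 g2 h2 x y U : ℝ} (hxy : y < x)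
    (hpos1 : ∀ t ∈ Ioo y x, 0 < quadratic f1 g1 h1 t)
    (hpos2 : ∀ t ∈ Ioo y x, 0 < quadratic f2 g2 h2 t)
    (hd1 : 0 ≤ g1 ^ 2 - f1 * h1) (hd2 : 0 ≤ g2 ^ 2 - f2 * h2)
    (hy1 : 0 < quadratic f1 g1 h1 y ∨ quadratic f1 g1 h1 y = 0 ∧ 0 < 2 * (g1 + h1 * y))
    (hy2 : 0 < quadratic f2 g2 h2 y ∨ quadratic f2 g2 h2 y = 0 ∧ 0 < 2 * (g2 + h2 * y))
    (hy : 0 < quadratic f1 g1 h1 y ∨ 0 < quadratic f2 g2 h2 y)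
    (hU : crossSlope (quadratic f1 g1 h1) (quadratic f2 g2 h2) y x = U) :
    ∫ t in y..x, (√(quadratic f1 g1 h1 t * quadratic f2 g2 h2 t))⁻¹ =
      2 * RF (U ^ 2 + (2 * g1 * g2 - f1 * h2 - f2 * h1)
                + 2 * √((g1 ^ 2 - f1 * h1) * (g2 ^ 2 - f2 * h2)))
             (U ^ 2 + (2 * g1 * g2 - f1 * h2 - f2 * h1)
                - 2 * √((g1 ^ 2 - f1 * h1) * (g2 ^ 2 - f2 * h2)))
             (U ^ 2) := by
  set u := crossSlope (quadratic f1 g1 h1) (quadratic f2 g2 h2) y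
  set w := crossPolar f1 g1 h1 f2 g2 h2 y
  have hu : ∀ t ∈ Ioo y x, 0 < u t := fun t ht => crossSlope_pos (hpos1 t ht) (hpos2 t ht) ht.1 hy
  have hw : ∀ t ∈ Ioo y x, 0 < w t := fun t ht =>
    crossPolar_pos hd1 hd2 hpos1 hpos2 hy1 hy2 hy ht
  have hcont : ContinuousOn (fun t => u t ^ 2 - U ^ 2) (Ioc y x) :=
    (((continuousOn_crossSlope (continuous_quadratic f1 g1 h1) (continuous_quadratic f2 g2 h2)
      y).mono fun _ ht => ht.1.ne').pow 2).sub continuousOn_const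
  have hderiv : ∀ t ∈ Ioo y x,
      HasDerivAt (fun t => u t ^ 2 - U ^ 2) (2 * u t * (-w t / (t - y) ^ 2)) t := fun t ht =>
    (((hasDerivAt_crossSlope (hpos1 t ht) (hpos2 t ht) ht.1.ne').pow 2).sub_const _).congr_deriv
      (by push_cast; ring)
  have hneg : ∀ t ∈ Ioo y x, 2 * u t * (-w t / (t - y) ^ 2) < 0 := fun t ht =>
    mul_neg_of_pos_of_neg (mul_pos two_pos (hu t ht))
      (div_neg_of_neg_of_pos (neg_neg_of_pos (hw t ht)) (pow_pos (sub_pos.mpr ht.1) 2))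
  have htop : Tendsto (fun t => u t ^ 2 - U ^ 2) (𝓝[>] y) atTop :=
    tendsto_atTop_add_const_right _ _ (tendsto_crossSlope_sq_atTop hy1 hy2 hy)
  have hV : (2 * √((g1 ^ 2 - f1 * h1) * (g2 ^ 2 - f2 * h2))) ^ 2
      = 4 * ((g1 ^ 2 - f1 * h1) * (g2 ^ 2 - f2 * h2)) := by
    rw [mul_pow, sq_sqrt (mul_nonneg hd1 hd2)]; norm_num
  have hx : (0 : ℝ) = u x ^ 2 - U ^ 2 := by rw [hU, sub_self]
  rw [intervalIntegral.integral_of_le hxy.le, integral_Ioc_eq_integral_Ioo, RF, ← mul_assoc,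
    show (2 : ℝ) * (1 / 2) = 1 by norm_num, one_mul, hx,
    ← integral_abs_deriv_mul_comp_eq_integral_Ioi _ hxy hcont hderiv hneg htop]
  refine setIntegral_congr_fun measurableSet_Ioo fun t ht => ?_
  rw [sqrt_mul (hpos1 t ht).le, abs_mul_inv_sqrt_eq_inv_mul (hu t ht) (hw t ht)
    (sub_ne_zero.mpr ht.1.ne') (sqrt_pos.mpr (hpos1 t ht)) (sqrt_pos.mpr (hpos2 t ht))
    (hV ▸ crossSlope_sq_add_sq_sub_eq_sq (hpos1 t ht) (hpos2 t ht)
      (hy1.elim le_of_lt fun h => h.1.ge) (hy2.elim le_of_lt fun h => h.1.ge) ht.1.ne')]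

theorem stmt19 (f1 g1 h1 f2 g2 h2 x y U : ℝ) (hxy : y < x)
    (q1 : ℝ → ℝ) (q2 : ℝ → ℝ)
    (hq1 : ∀ t, q1 t = f1 + 2 * g1 * t + h1 * t ^ 2)
    (hq2 : ∀ t, q2 t = f2 + 2 * g2 * t + h2 * t ^ 2)
    (hpos1 : ∀ t ∈ Set.Ioo y x, 0 < q1 t)
    (hpos2 : ∀ t ∈ Set.Ioo y x, 0 < q2 t)
    (hsimple : ∀ t ∈ Set.Icc y x,
      ¬(q1 t * q2 t = 0 ∧ deriv (fun s => q1 s * q2 s) t = 0))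
    (hd1 : 0 ≤ g1 ^ 2 - f1 * h1) (hd2 : 0 ≤ g2 ^ 2 - f2 * h2)
    (hU : (x - y) * U = Real.sqrt (q1 x * q2 y) + Real.sqrt (q1 y * q2 x)) :
    ∫ t in y..x, (Real.sqrt (q1 t * q2 t))⁻¹ =
      2 * RF (U ^ 2 + (2 * g1 * g2 - f1 * h2 - f2 * h1)
                + 2 * Real.sqrt ((g1 ^ 2 - f1 * h1) * (g2 ^ 2 - f2 * h2)))
             (U ^ 2 + (2 * g1 * g2 - f1 * h2 - f2 * h1)
                - 2 * Real.sqrt ((g1 ^ 2 - f1 * h1) * (g2 ^ 2 - f2 * h2)))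
             (U ^ 2) := by
  obtain rfl : q1 = quadratic f1 g1 h1 := funext hq1
  obtain rfl : q2 = quadratic f2 g2 h2 := funext hq2
  have hprod : HasDerivAt (fun s => quadratic f1 g1 h1 s * quadratic f2 g2 h2 s) _ y :=
    (hasDerivAt_quadratic f1 g1 h1 y).mul (hasDerivAt_quadratic f2 g2 h2 y)
  have hsimple_y := hsimple y (left_mem_Icc.mpr hxy.le)
  rw [hprod.deriv] at hsimple_y
  obtain ⟨hy1, hy2, hy⟩ := (hasDerivAt_quadratic f1 g1 h1 y).pos_or_eq_zero_and_pos_of_mul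
    (hasDerivAt_quadratic f2 g2 h2 y) (eventually_of_mem (Ioo_mem_nhdsGT hxy) hpos1)
    (eventually_of_mem (Ioo_mem_nhdsGT hxy) hpos2) hsimple_y
  refine integral_inv_sqrt_quadratic_mul_quadratic hxy hpos1 hpos2 hd1 hd2 hy1 hy2 hy ?_
  rw [crossSlope, div_eq_iff (sub_ne_zero.mpr hxy.ne'), mul_comm U, hU,
    sqrt_mul' _ (hy2.elim le_of_lt fun h => h.1.ge), sqrt_mul (hy1.elim le_of_lt fun h => h.1.ge)]
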